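/- Let T and Q be 2×2 real symmetric positive definite matrices with largest eigenvalues λ_T and λ_Q respectively, and let C be an invertible 2×2 real matrix. Then the smallest eigenvalue of T·C⁻¹·Q·(Cᵀ)⁻¹ is at most 2·λ_T·λ_Q/Tr(C·Cᵀ). -/

import Mathlib

open Matrix

lemma inv_inv_mul_sq (d P : ℝ) (hd : d ≠ 0) : d⁻¹ * d⁻¹ * P * d^2 = P := by
  have h : d * d⁻¹ = 1 := mul_inv_cancel₀ hd
  linear_combination P*(d*d⁻¹ + 1)*h

lemma spec_iff_fin_two (M : Matrix (Fin 2) (Fin 2) ℝ) (x : ℝ) :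
    x ∈ spectrum ℝ M ↔ x^2 - M.trace * x + M.det = 0 := by
  rw [spectrum.mem_iff, Matrix.isUnit_iff_isUnit_det, isUnit_iff_ne_zero, not_not]
  have h : (algebraMap ℝ (Matrix (Fin 2) (Fin 2) ℝ) x - M).det
      = x^2 - M.trace * x + M.det := by
    simp [Matrix.det_fin_two, Matrix.trace_fin_two, Matrix.algebraMap_matrix_apply]
    ring
  rw [h]


lemma pair (s0 s1 s3 b0 b1 b3 : ℝ) (hs0 : 0 ≤ s0) (hs3 : 0 ≤ s3)
    (hs : s1^2 ≤ s0*s3) (hb0 : 0 ≤ b0) (hb3 : 0 ≤ b3) (hb : b1^2 ≤ b0*b3) :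
    0 ≤ s0*b0 + 2*s1*b1 + s3*b3 := by
  have h4 : s1^2 * b1^2 ≤ (s0*s3) * (b0*b3) :=
    mul_le_mul hs hb (sq_nonneg b1) (by positivity)
  nlinarith only [h4, sq_nonneg (s0*b0 - s3*b3), sq_nonneg (s0*b0 + s3*b3),
    mul_nonneg (mul_nonneg hs0 hb0) (mul_nonneg hs3 hb3),
    mul_nonneg hs0 hb0, mul_nonneg hs3 hb3]

lemma eig_facts (a b c l : ℝ) (ha : 0 < a) (hb : 0 < b) (hd : 0 < a*b - c^2)
    (hl : l^2 - (a+b)*l + (a*b - c^2) = 0) (hl2 : a + b - l ≤ l) :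
    0 < l ∧ 0 < a + b - l ∧ 0 ≤ a - (a+b-l) ∧ 0 ≤ b - (a+b-l) ∧
      (a - (a+b-l)) * (b - (a+b-l)) = c^2 ∧ (a+b-l) * l = a*b - c^2 := by
  have hprod : (a+b-l) * l = a*b - c^2 := by linear_combination -hl
  have hlpos : 0 < l := by nlinarith only [hprod, hd, ha, hb, hl2]
  have hmpos : 0 < a + b - l := by
    rcases lt_trichotomy (a+b-l) 0 with h | h | h
    · nlinarith only [h, hlpos, hprod, hd]
    · exfalso; rw [h, zero_mul] at hprod; linarith only [hprod, hd]
    · exact h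
  have hpr2 : (a - (a+b-l)) * (b - (a+b-l)) = c^2 := by linear_combination hl
  have hsum : 0 ≤ (a - (a+b-l)) + (b - (a+b-l)) := by linarith only [hl2]
  have h1 : 0 ≤ a - (a+b-l) := by
    by_contra h
    push_neg at h
    nlinarith only [h, hsum, hpr2, sq_nonneg c]
  have h2 : 0 ≤ b - (a+b-l) := by
    by_contra h
    push_neg at h
    nlinarith only [h, hsum, hpr2, sq_nonneg c]
  exact ⟨hlpos, hmpos, h1, h2, hpr2, hprod⟩

lemma sum_sq_pos (c0 c1 c2 c3 : ℝ) (h : c0*c3 - c1*c2 ≠ 0) :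
    0 < c0^2 + c1^2 + c2^2 + c3^2 := by
  by_contra h'
  push_neg at h'
  have e0 : c0 = 0 := by
    have h2 : c0^2 ≤ 0 := by linarith only [h', sq_nonneg c1, sq_nonneg c2, sq_nonneg c3]
    exact (pow_eq_zero_iff two_ne_zero).mp (le_antisymm h2 (sq_nonneg c0))
  have e1 : c1 = 0 := by
    have h2 : c1^2 ≤ 0 := by linarith only [h', sq_nonneg c0, sq_nonneg c2, sq_nonneg c3]
    exact (pow_eq_zero_iff two_ne_zero).mp (le_antisymm h2 (sq_nonneg c1))
  have e2 : c2 = 0 := by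
    have h2 : c2^2 ≤ 0 := by linarith only [h', sq_nonneg c0, sq_nonneg c1, sq_nonneg c3]
    exact (pow_eq_zero_iff two_ne_zero).mp (le_antisymm h2 (sq_nonneg c2))
  apply h
  rw [e0, e1, e2]
  ring

set_option maxHeartbeats 1000000 in
lemma key (t0 t1 t3 q0 q1 q3 c0 c1 c2 c3 lT lQ μ aM dM : ℝ)
    (hdC : c0*c3 - c1*c2 ≠ 0)
    (ht0 : 0 < t0) (ht3 : 0 < t3) (hdT : 0 < t0*t3 - t1^2)
    (hq0 : 0 < q0) (hq3 : 0 < q3) (hdQ : 0 < q0*q3 - q1^2)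
    (hlT : lT^2 - (t0+t3)*lT + (t0*t3 - t1^2) = 0)
    (hlT2 : t0 + t3 - lT ≤ lT)
    (hlQ : lQ^2 - (q0+q3)*lQ + (q0*q3 - q1^2) = 0)
    (hlQ2 : q0 + q3 - lQ ≤ lQ)
    (hμpoly : μ^2 - aM*μ + dM = 0)
    (hμ2 : 2*μ ≤ aM)
    (hdM : dM * (c0*c3 - c1*c2)^2 = (t0*t3 - t1^2)*(q0*q3 - q1^2))
    (haM : aM * (c0*c3 - c1*c2)^2 =
      t0*(c3^2*q0 - 2*c1*c3*q1 + c1^2*q3)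
      + 2*t1*(-(c2*c3*q0) + (c0*c3+c1*c2)*q1 - c0*c1*q3)
      + t3*(c2^2*q0 - 2*c0*c2*q1 + c0^2*q3)) :
    μ ≤ 2*lT*lQ/(c0^2+c1^2+c2^2+c3^2) := by
  obtain ⟨hlTpos, hmTpos, hs0T, hs3T, hTprod, hmTlT⟩ := eig_facts t0 t3 t1 lT ht0 ht3 hdT hlT hlT2
  obtain ⟨hlQpos, hmQpos, hs0Q, hs3Q, hQprod, hmQlQ⟩ := eig_facts q0 q3 q1 lQ hq0 hq3 hdQ hlQ hlQ2
  have hs : 0 < c0^2 + c1^2 + c2^2 + c3^2 := sum_sq_pos c0 c1 c2 c3 hdC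
  set dC := c0*c3 - c1*c2 with hdCdef
  set mT := t0 + t3 - lT with hmTdef
  set mQ := q0 + q3 - lQ with hmQdef
  set b0 := c3^2*q0 - 2*c1*c3*q1 + c1^2*q3 with hb0def
  set b1 := -(c2*c3*q0) + (c0*c3+c1*c2)*q1 - c0*c1*q3 with hb1def
  set b3 := c2^2*q0 - 2*c0*c2*q1 + c0^2*q3 with hb3def
  set s := c0^2 + c1^2 + c2^2 + c3^2 with hsdef
  have hdC2 : 0 < dC^2 := by positivity
  have hb0n : 0 ≤ b0 := by
    rw [hb0def]
    nlinarith only [hq0, hdQ, sq_nonneg (q0*c3 - q1*c1), mul_nonneg hdQ.le (sq_nonneg c1)]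
  have hb3n : 0 ≤ b3 := by
    rw [hb3def]
    nlinarith only [hq0, hdQ, sq_nonneg (q0*c2 - q1*c0), mul_nonneg hdQ.le (sq_nonneg c0)]
  have hdetB : b1^2 ≤ b0*b3 := by
    have h : b0*b3 - b1^2 = (q0*q3 - q1^2)*dC^2 := by
      rw [hb0def, hb1def, hb3def, hdCdef]; ring
    nlinarith only [h, mul_pos hdQ hdC2]
  have hp1 : 0 ≤ (t0 - mT)*b0 + 2*t1*b1 + (t3 - mT)*b3 :=
    pair _ _ _ _ _ _ hs0T hs3T (le_of_eq hTprod.symm) hb0n hb3n hdetB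
  have ha0 : (0:ℝ) ≤ c2^2 + c3^2 := by positivity
  have ha3 : (0:ℝ) ≤ c0^2 + c1^2 := by positivity
  have hdetA : (-(c0*c2 + c1*c3))^2 ≤ (c2^2 + c3^2)*(c0^2 + c1^2) := by
    nlinarith only [sq_nonneg (c0*c3 - c1*c2)]
  have hp2 : 0 ≤ (q0 - mQ)*(c2^2 + c3^2) + 2*q1*(-(c0*c2 + c1*c3)) + (q3 - mQ)*(c0^2 + c1^2) :=
    pair _ _ _ _ _ _ hs0Q hs3Q (le_of_eq hQprod.symm) ha0 ha3 hdetA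
  have htrB : mQ * s ≤ b0 + b3 := by
    have h : (q0 - mQ)*(c2^2 + c3^2) + 2*q1*(-(c0*c2 + c1*c3)) + (q3 - mQ)*(c0^2 + c1^2)
        = b0 + b3 - mQ * s := by
      rw [hb0def, hb3def, hsdef]; ring
    rw [h] at hp2
    linarith only [hp2]
  have htrN : mT * (mQ * s) ≤ t0*b0 + 2*t1*b1 + t3*b3 := by
    have h1 : mT * (b0 + b3) ≤ t0*b0 + 2*t1*b1 + t3*b3 := by linarith only [hp1]
    have h2 := mul_le_mul_of_nonneg_left htrB hmTpos.le
    linarith only [h1, h2]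
  have hdMpos : 0 < dM := by
    nlinarith only [hdM, hdC2, mul_pos hdT hdQ]
  have haMpos : 0 < aM := by
    nlinarith only [haM, htrN, mul_pos (mul_pos hmTpos hmQpos) hs, hdC2]
  have hμpos : 0 < μ := by
    nlinarith only [hμpoly, hdMpos, haMpos, sq_nonneg μ]
  have h12 : μ * aM ≤ 2 * dM := by
    nlinarith only [mul_nonneg hμpos.le (show (0:ℝ) ≤ aM - 2*μ by linarith only [hμ2]), hμpoly]
  rw [le_div_iff₀ hs]
  have hchain : μ * (mT * (mQ * s)) ≤ μ * (aM * dC^2) := by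
    have h := mul_le_mul_of_nonneg_left htrN hμpos.le
    calc μ * (mT * (mQ * s)) ≤ μ * (t0*b0 + 2*t1*b1 + t3*b3) := h
      _ = μ * (aM * dC^2) := by rw [haM]
  have h2 : μ * (aM * dC^2) ≤ 2 * ((t0*t3 - t1^2)*(q0*q3 - q1^2)) := by
    have h := mul_le_mul_of_nonneg_right h12 hdC2.le
    calc μ * (aM * dC^2) = (μ * aM) * dC^2 := by ring
      _ ≤ (2*dM) * dC^2 := h
      _ = 2 * (dM * dC^2) := by ring
      _ = 2 * ((t0*t3 - t1^2)*(q0*q3 - q1^2)) := by rw [hdM]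
  have h3 : μ * (mT * (mQ * s)) ≤ 2 * ((mT*lT)*(mQ*lQ)) := by
    rw [hmTlT, hmQlQ]
    linarith only [hchain, h2]
  have hmm : 0 < mT * mQ := mul_pos hmTpos hmQpos
  have h4 : (mT*mQ) * (μ*s) ≤ (mT*mQ) * (2*(lT*lQ)) := by linarith only [h3]
  have h5 := (mul_le_mul_iff_of_pos_left hmm).mp h4
  linarith only [h5]

/-- If `T`, `Q` are 2×2 real symmetric positive definite matrices with largest
eigenvalues `lT`, `lQ`, and `C` is invertible, then the smallest eigenvalue `μ`
of `T * C⁻¹ * Q * (Cᵀ)⁻¹` satisfies `μ ≤ 2 * lT * lQ / Tr (C * Cᵀ)`. -/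
theorem stmt1 (T Q C : Matrix (Fin 2) (Fin 2) ℝ)
    (hT : T.PosDef) (hQ : Q.PosDef) (hC : IsUnit C.det)
    (lT lQ μ : ℝ)
    (hlT : lT ∈ spectrum ℝ T) (hlTmax : ∀ ν ∈ spectrum ℝ T, ν ≤ lT)
    (hlQ : lQ ∈ spectrum ℝ Q) (hlQmax : ∀ ν ∈ spectrum ℝ Q, ν ≤ lQ)
    (hμ : μ ∈ spectrum ℝ (T * C⁻¹ * Q * Cᵀ⁻¹))
    (hμmin : ∀ ν ∈ spectrum ℝ (T * C⁻¹ * Q * Cᵀ⁻¹), μ ≤ ν) :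
    μ ≤ 2 * lT * lQ / (C * Cᵀ).trace := by
  have hT10 : T 1 0 = T 0 1 := by simpa using hT.1.apply 0 1
  have hQ10 : Q 1 0 = Q 0 1 := by simpa using hQ.1.apply 0 1
  have ht0 : 0 < T 0 0 := by
    have h := hT.dotProduct_mulVec_pos (x := ![1,0]) (by intro h; have := congrFun h 0; simp at this)
    simpa [dotProduct, mulVec, Fin.sum_univ_two] using h
  have ht3 : 0 < T 1 1 := by
    have h := hT.dotProduct_mulVec_pos (x := ![0,1]) (by intro h; have := congrFun h 1; simp at this)
    simpa [dotProduct, mulVec, Fin.sum_univ_two] using h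
  have hq0 : 0 < Q 0 0 := by
    have h := hQ.dotProduct_mulVec_pos (x := ![1,0]) (by intro h; have := congrFun h 0; simp at this)
    simpa [dotProduct, mulVec, Fin.sum_univ_two] using h
  have hq3 : 0 < Q 1 1 := by
    have h := hQ.dotProduct_mulVec_pos (x := ![0,1]) (by intro h; have := congrFun h 1; simp at this)
    simpa [dotProduct, mulVec, Fin.sum_univ_two] using h
  have hCdet : C.det ≠ 0 := hC.ne_zero
  have hdCne : C 0 0 * C 1 1 - C 0 1 * C 1 0 ≠ 0 := by
    rwa [Matrix.det_fin_two] at hCdet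
  have hdT : 0 < T 0 0 * T 1 1 - (T 0 1)^2 := by
    have h := hT.det_pos
    rw [Matrix.det_fin_two, hT10] at h
    nlinarith only [h]
  have hdQ : 0 < Q 0 0 * Q 1 1 - (Q 0 1)^2 := by
    have h := hQ.det_pos
    rw [Matrix.det_fin_two, hQ10] at h
    nlinarith only [h]
  -- spectrum facts for T
  have hlT' : lT^2 - (T 0 0 + T 1 1)*lT + (T 0 0 * T 1 1 - (T 0 1)^2) = 0 := by
    have h := (spec_iff_fin_two T lT).mp hlT
    rw [Matrix.trace_fin_two, Matrix.det_fin_two, hT10] at h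
    linear_combination h
  have hlT2 : T 0 0 + T 1 1 - lT ≤ lT := by
    have hmem : (T.trace - lT) ∈ spectrum ℝ T := by
      rw [spec_iff_fin_two]
      have h := (spec_iff_fin_two T lT).mp hlT
      linear_combination h
    have h := hlTmax _ hmem
    rw [Matrix.trace_fin_two] at h
    linarith only [h]
  have hlQ' : lQ^2 - (Q 0 0 + Q 1 1)*lQ + (Q 0 0 * Q 1 1 - (Q 0 1)^2) = 0 := by
    have h := (spec_iff_fin_two Q lQ).mp hlQ
    rw [Matrix.trace_fin_two, Matrix.det_fin_two, hQ10] at h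
    linear_combination h
  have hlQ2 : Q 0 0 + Q 1 1 - lQ ≤ lQ := by
    have hmem : (Q.trace - lQ) ∈ spectrum ℝ Q := by
      rw [spec_iff_fin_two]
      have h := (spec_iff_fin_two Q lQ).mp hlQ
      linear_combination h
    have h := hlQmax _ hmem
    rw [Matrix.trace_fin_two] at h
    linarith only [h]
  -- spectrum facts for M
  set M := T * C⁻¹ * Q * Cᵀ⁻¹ with hMdef
  have hμpoly : μ^2 - M.trace*μ + M.det = 0 := (spec_iff_fin_two M μ).mp hμ
  have hμ2 : 2*μ ≤ M.trace := by
    have hmem : (M.trace - μ) ∈ spectrum ℝ M := by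
      rw [spec_iff_fin_two]
      linear_combination hμpoly
    have h := hμmin _ hmem
    linarith only [h]
  -- determinant of M
  have hdM : M.det * (C 0 0 * C 1 1 - C 0 1 * C 1 0)^2
      = (T 0 0 * T 1 1 - (T 0 1)^2) * (Q 0 0 * Q 1 1 - (Q 0 1)^2) := by
    have h1 : M.det = T.det * C.det⁻¹ * Q.det * C.det⁻¹ := by
      rw [hMdef, Matrix.det_mul, Matrix.det_mul, Matrix.det_mul,
        Matrix.det_nonsing_inv, Ring.inverse_eq_inv',
        Matrix.det_nonsing_inv, Ring.inverse_eq_inv', Matrix.det_transpose]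
    rw [h1, Matrix.det_fin_two T, Matrix.det_fin_two Q, Matrix.det_fin_two C, hT10, hQ10]
    field_simp
  -- trace of M
  have hCinv : C⁻¹ = (C.det)⁻¹ • C.adjugate := by
    rw [Matrix.inv_def, Ring.inverse_eq_inv']
  have hCTinv : Cᵀ⁻¹ = (C.det)⁻¹ • (C.adjugate)ᵀ := by
    rw [Matrix.inv_def, Matrix.adjugate_transpose, Matrix.det_transpose, Ring.inverse_eq_inv']
  have hMN : M = (C.det⁻¹ * C.det⁻¹) • (T * C.adjugate * Q * C.adjugateᵀ) := by
    rw [hMdef, hCinv, hCTinv]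
    simp only [Matrix.mul_smul, Matrix.smul_mul, smul_smul]
  have htrN : (T * C.adjugate * Q * C.adjugateᵀ).trace =
      T 0 0*((C 1 1)^2*(Q 0 0) - 2*(C 0 1)*(C 1 1)*(Q 0 1) + (C 0 1)^2*(Q 1 1))
      + 2*(T 0 1)*(-((C 1 0)*(C 1 1)*(Q 0 0)) + ((C 0 0)*(C 1 1)+(C 0 1)*(C 1 0))*(Q 0 1)
          - (C 0 0)*(C 0 1)*(Q 1 1))
      + T 1 1*((C 1 0)^2*(Q 0 0) - 2*(C 0 0)*(C 1 0)*(Q 0 1) + (C 0 0)^2*(Q 1 1)) := by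
    rw [Matrix.adjugate_fin_two]
    simp [Matrix.trace_fin_two, Matrix.mul_apply, Fin.sum_univ_two, Matrix.transpose_apply,
      Matrix.cons_val_zero, Matrix.cons_val_one, Matrix.head_cons, Matrix.vecHead,
      Matrix.vecTail, hT10, hQ10]
    ring
  have htrM : M.trace * (C 0 0 * C 1 1 - C 0 1 * C 1 0)^2 =
      T 0 0*((C 1 1)^2*(Q 0 0) - 2*(C 0 1)*(C 1 1)*(Q 0 1) + (C 0 1)^2*(Q 1 1))
      + 2*(T 0 1)*(-((C 1 0)*(C 1 1)*(Q 0 0)) + ((C 0 0)*(C 1 1)+(C 0 1)*(C 1 0))*(Q 0 1)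
          - (C 0 0)*(C 0 1)*(Q 1 1))
      + T 1 1*((C 1 0)^2*(Q 0 0) - 2*(C 0 0)*(C 1 0)*(Q 0 1) + (C 0 0)^2*(Q 1 1)) := by
    rw [hMN, Matrix.trace_smul, htrN, smul_eq_mul, Matrix.det_fin_two C]
    exact inv_inv_mul_sq _ _ hdCne
  have hgoal : (C * Cᵀ).trace = (C 0 0)^2 + (C 0 1)^2 + (C 1 0)^2 + (C 1 1)^2 := by
    simp [Matrix.trace_fin_two, Matrix.mul_apply, Fin.sum_univ_two]
    ring
  rw [hgoal]
  exact key (T 0 0) (T 0 1) (T 1 1) (Q 0 0) (Q 0 1) (Q 1 1)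
    (C 0 0) (C 0 1) (C 1 0) (C 1 1) lT lQ μ M.trace M.det
    hdCne ht0 ht3 hdT hq0 hq3 hdQ hlT' hlT2 hlQ' hlQ2 hμpoly hμ2 hdM htrM
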